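/- arXiv:1212.3448 — 2 statements merged into one kernel-verified Lean document; each statement's English description precedes it below -/
import Mathlib

section
/- For all 0 < y ≤ 1, the half-plane growth constant with surface fugacity y satisfies μ(y) = μ, where μ is the growth constant of self-avoiding walks on ℤ². -/
open Filter

/-- `IsSAW d n w` : `w` is an `n`-step self-avoiding walk on `ℤ^d`,
i.e. an injective map from `{0,…,n}` to `ℤ^d` starting at the origin whose
consecutive points are at `ℓ¹` distance `1`. -/
def IsSAW (d n : ℕ) (w : Fin (n + 1) → Fin d → ℤ) : Prop :=
  Function.Injective w ∧ w 0 = 0 ∧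
    ∀ i : Fin n, (∑ k, |w i.succ k - w i.castSucc k|) = 1

/-- `sawCount d n` : the number `c_n` of `n`-step self-avoiding walks on `ℤ^d`. -/
noncomputable def sawCount (d n : ℕ) : ℕ :=
  Nat.card {w : Fin (n + 1) → Fin d → ℤ // IsSAW d n w}

/-- An `n`-step half-plane self-avoiding walk on `ℤ²`: a SAW staying in the
upper half-plane `{(x₁,x₂) : x₂ ≥ 0}`. -/
def IsHalfPlaneSAW (n : ℕ) (w : Fin (n + 1) → Fin 2 → ℤ) : Prop :=
  IsSAW 2 n w ∧ ∀ i, 0 ≤ w i 1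

/-- `hpCount n i` : the number `c_n^+(i)` of `n`-step half-plane SAWs having
exactly `i` vertices on the surface (i.e. indices `j` with `w(j)₂ = 0`). -/
noncomputable def hpCount (n i : ℕ) : ℕ :=
  Nat.card {w : Fin (n + 1) → Fin 2 → ℤ // IsHalfPlaneSAW n w ∧
    (Finset.univ.filter fun j => w j 1 = 0).card = i}

/-- `hpPartition n y` : the partition function `C_n^+(y) = Σ_i c_n^+(i) y^i`. -/
noncomputable def hpPartition (n : ℕ) (y : ℝ) : ℝ :=
  ∑ i ∈ Finset.range (n + 2), (hpCount n i : ℝ) * y ^ i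

/-!
Since `y ≤ 1`, the partition function `C_n^+(y)` is at most the number `h_n` of half-plane walks,
hence at most `c_n`; this gives `μ(y) ≤ μ`.

Conversely, cutting a walk at a lowest vertex produces two half-plane walks, so
`c_n ≤ ∑_j h_j h_{n-j}`; and lifting a half-plane walk by one unit and prepending the origin
gives a walk with exactly one surface vertex, so `y h_m ≤ C_{m+1}^+(y)`. For `ρ > μ(y)` we have
`C_m^+(y) ≤ K ρ^m` for all `m`, hence `c_n ≤ (n + 1) (Kρ/y)² ρ^n`, and the polynomial factor
does not change the exponential growth rate: `μ ≤ ρ`.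
-/

open Function Topology Finset

section GrowthRate

variable {a : ℕ → ℝ} {L ρ : ℝ}

lemma nonneg_of_tendsto_rpow (ha : ∀ n, 0 ≤ a n)
    (hL : Tendsto (fun n : ℕ => a n ^ (1 / (n : ℝ))) atTop (𝓝 L)) : 0 ≤ L :=
  ge_of_tendsto' hL fun n => Real.rpow_nonneg (ha n) _

lemma le_of_tendsto_rpow_of_eventually_le_pow (ha : ∀ n, 0 ≤ a n)
    (hL : Tendsto (fun n : ℕ => a n ^ (1 / (n : ℝ))) atTop (𝓝 L)) (hρ : 0 ≤ ρ)
    (h : ∀ᶠ n in atTop, a n ≤ ρ ^ n) : L ≤ ρ := by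
  refine le_of_tendsto hL ?_
  filter_upwards [h, eventually_ne_atTop 0] with n hn hn0
  calc a n ^ (1 / (n : ℝ)) ≤ (ρ ^ n) ^ (1 / (n : ℝ)) :=
        Real.rpow_le_rpow (ha n) hn (by positivity)
    _ = ρ := by rw [one_div, Real.pow_rpow_inv_natCast hρ hn0]

lemma exists_forall_le_mul_pow_of_tendsto_rpow (ha : ∀ n, 0 ≤ a n)
    (hL : Tendsto (fun n : ℕ => a n ^ (1 / (n : ℝ))) atTop (𝓝 L)) (hLρ : L < ρ) :
    ∃ K, ∀ n, a n ≤ K * ρ ^ n := by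
  have hρ : 0 < ρ := (nonneg_of_tendsto_rpow ha hL).trans_lt hLρ
  have hbdd : ∀ᶠ n in atTop, a n / ρ ^ n ≤ 1 := by
    filter_upwards [hL.eventually_lt_const hLρ, eventually_ne_atTop 0] with n hn hn0
    rw [div_le_one (by positivity), ← Real.rpow_inv_natCast_pow (ha n) hn0, ← one_div]
    exact pow_le_pow_left₀ (Real.rpow_nonneg (ha n) _) hn.le n
  obtain ⟨K, hK⟩ := (isBoundedUnder_of_eventually_le hbdd).bddAbove_range
  refine ⟨K, fun n => ?_⟩
  rw [← div_le_iff₀ (by positivity)]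
  exact hK ⟨n, rfl⟩

lemma eventually_mul_pow_le_pow (C : ℝ) {ρ' : ℝ} (hρ : 0 ≤ ρ) (hρρ' : ρ < ρ') :
    ∀ᶠ n : ℕ in atTop, C * (n + 1) * ρ ^ n ≤ ρ' ^ n := by
  have hρ' : 0 < ρ' := hρ.trans_lt hρρ'
  have hq : ρ / ρ' < 1 := (div_lt_one hρ').mpr hρρ'
  have hlim : Tendsto (fun n : ℕ => C * ((n * (ρ / ρ') ^ n) + (ρ / ρ') ^ n)) atTop (𝓝 0) := by
    simpa using ((tendsto_self_mul_const_pow_of_lt_one (by positivity) hq).add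
      (tendsto_pow_atTop_nhds_zero_of_lt_one (by positivity) hq)).const_mul C
  filter_upwards [hlim.eventually_le_const zero_lt_one] with n hn
  calc C * (n + 1) * ρ ^ n = C * (n * (ρ / ρ') ^ n + (ρ / ρ') ^ n) * ρ' ^ n := by
        rw [div_pow]; field_simp
    _ ≤ ρ' ^ n := mul_le_of_le_one_left (by positivity) hn

end GrowthRate

namespace IsSAW

variable {d n m : ℕ} {w : Fin (n + 1) → Fin d → ℤ}

lemma abs_sub_le_one (hw : IsSAW d n w) (i : Fin n) (k : Fin d) :
    |w i.succ k - w i.castSucc k| ≤ 1 :=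
  (single_le_sum (fun _ _ => abs_nonneg _) (mem_univ k)).trans (hw.2.2 i).le

lemma abs_apply_le (hw : IsSAW d n w) (i : Fin (n + 1)) (k : Fin d) : |w i k| ≤ i := by
  induction i using Fin.induction with
  | zero => simp [hw.2.1]
  | succ i ih =>
    have := abs_sub_abs_le_abs_sub (w i.succ k) (w i.castSucc k)
    have := hw.abs_sub_le_one i k
    simp only [Fin.val_succ, Fin.val_castSucc] at ih ⊢
    push_cast
    linarith

lemma sum_abs_sub_eq_one (hw : IsSAW d n w) {a b : Fin (n + 1)}
    (hab : (b : ℕ) = a + 1 ∨ (a : ℕ) = b + 1) : ∑ k, |w b k - w a k| = 1 := by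
  rcases hab with h | h
  · obtain ⟨j, rfl, rfl⟩ : ∃ j : Fin n, a = j.castSucc ∧ b = j.succ :=
      ⟨⟨a, by omega⟩, rfl, Fin.ext h⟩
    exact hw.2.2 j
  · obtain ⟨j, rfl, rfl⟩ : ∃ j : Fin n, b = j.castSucc ∧ a = j.succ :=
      ⟨⟨b, by omega⟩, rfl, Fin.ext h⟩
    simpa only [abs_sub_comm] using hw.2.2 j

lemma comp_sub (hw : IsSAW d n w) {f : Fin (m + 1) → Fin (n + 1)} (hf : Injective f)
    (hstep : ∀ i : Fin m, (f i.succ : ℕ) = f i.castSucc + 1 ∨ (f i.castSucc : ℕ) = f i.succ + 1) :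
    IsSAW d m fun i => w (f i) - w (f 0) :=
  ⟨(sub_left_injective).comp (hw.1.comp hf), sub_self _,
    fun i => by simpa using hw.sum_abs_sub_eq_one (hstep i)⟩

end IsSAW

lemma finite_setOf_isSAW (d n : ℕ) : {w | IsSAW d n w}.Finite := by
  refine (Set.Finite.pi fun _ => Set.Finite.pi fun _ => Set.finite_Icc (-(n : ℤ)) n).subset ?_
  intro w hw i _ k _
  exact abs_le.mp ((hw.abs_apply_le i k).trans (by exact_mod_cast i.is_le))

instance (d n : ℕ) : Finite {w : Fin (n + 1) → Fin d → ℤ // IsSAW d n w} :=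
  (finite_setOf_isSAW d n).to_subtype

abbrev HalfPlaneSAW (n : ℕ) := {w : Fin (n + 1) → Fin 2 → ℤ // IsHalfPlaneSAW n w}

noncomputable def hpTotal (n : ℕ) : ℕ := Nat.card (HalfPlaneSAW n)

instance (n : ℕ) : Finite (HalfPlaneSAW n) :=
  ((finite_setOf_isSAW 2 n).subset fun _ hw => hw.1).to_subtype

instance (n i : ℕ) : Finite {w : Fin (n + 1) → Fin 2 → ℤ // IsHalfPlaneSAW n w ∧
    (univ.filter fun j => w j 1 = 0).card = i} :=
  ((finite_setOf_isSAW 2 n).subset fun _ hw => hw.1.1).to_subtype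

lemma sum_hpCount_le_sawCount (n : ℕ) : ∑ i ∈ range (n + 2), hpCount n i ≤ sawCount 2 n := by
  rw [← Fin.sum_univ_eq_sum_range]
  simp only [hpCount]
  rw [← Nat.card_sigma]
  refine Nat.card_le_card_of_injective (fun p => ⟨p.2.1, p.2.2.1.1⟩) ?_
  rintro ⟨i, w, hw⟩ ⟨i', w', hw'⟩ h
  obtain rfl : w = w' := congrArg Subtype.val h
  obtain rfl : i = i' := Fin.ext (hw.2.symm.trans hw'.2)
  rfl

def consUp {n : ℕ} (w : Fin (n + 1) → Fin 2 → ℤ) : Fin (n + 2) → Fin 2 → ℤ :=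
  Fin.cons 0 fun i => w i + Pi.single 1 1

section consUp

variable {n : ℕ} {w : Fin (n + 1) → Fin 2 → ℤ}

lemma isHalfPlaneSAW_consUp (hw : IsHalfPlaneSAW n w) : IsHalfPlaneSAW (n + 1) (consUp w) := by
  refine ⟨⟨Fin.cons_injective_iff.mpr ⟨?_, (add_left_injective _).comp hw.1.1⟩, rfl, ?_⟩, ?_⟩
  · rintro ⟨i, hi⟩
    have := congrFun hi 1
    simp only [Fin.isValue, Pi.add_apply, Pi.single_eq_same, Pi.zero_apply] at this
    linarith [hw.2 i]
  · intro i
    induction i using Fin.cases with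
    | zero => simp [consUp, hw.1.2.1, Fin.sum_univ_two]
    | succ i => simpa [consUp, ← Fin.succ_castSucc] using hw.1.2.2 i
  · intro i
    induction i using Fin.cases with
    | zero => simp [consUp]
    | succ i =>
      simp only [consUp, Fin.isValue, Fin.cons_succ, Pi.add_apply, Pi.single_eq_same]
      linarith [hw.2 i]

lemma card_contacts_consUp (hw : IsHalfPlaneSAW n w) :
    (univ.filter fun j => consUp w j 1 = 0).card = 1 := by
  rw [card_eq_one]
  refine ⟨0, ?_⟩
  ext j
  rw [mem_filter, mem_singleton]
  induction j using Fin.cases with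
  | zero => simp [consUp]
  | succ j =>
    simp only [consUp, Fin.isValue, Fin.cons_succ, Pi.add_apply, Pi.single_eq_same,
      Fin.succ_ne_zero, iff_false]
    have := hw.2 j
    omega

end consUp

lemma hpTotal_le_hpCount_one (n : ℕ) : hpTotal n ≤ hpCount (n + 1) 1 := by
  refine Nat.card_le_card_of_injective
    (fun w => ⟨consUp w.1, isHalfPlaneSAW_consUp w.2, card_contacts_consUp w.2⟩) fun w w' h => ?_
  have := Fin.cons_right_injective (α := fun _ => Fin 2 → ℤ) 0 (congrArg Subtype.val h)
  exact Subtype.ext (funext fun i => add_right_cancel (congrFun this i))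

noncomputable def lowestIndex {n : ℕ} (w : Fin (n + 1) → Fin 2 → ℤ) : Fin (n + 1) :=
  (Finite.exists_min fun i => w i 1).choose

lemma lowestIndex_le {n : ℕ} (w : Fin (n + 1) → Fin 2 → ℤ) (i : Fin (n + 1)) :
    w (lowestIndex w) 1 ≤ w i 1 :=
  (Finite.exists_min fun i => w i 1).choose_spec i

lemma IsSAW.isHalfPlaneSAW_comp_sub {n m : ℕ} {w : Fin (n + 1) → Fin 2 → ℤ} (hw : IsSAW 2 n w)
    {f : Fin (m + 1) → Fin (n + 1)} (hf : Injective f)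
    (hstep : ∀ i : Fin m, (f i.succ : ℕ) = f i.castSucc + 1 ∨ (f i.castSucc : ℕ) = f i.succ + 1)
    {j : Fin (n + 1)} (hf0 : f 0 = j) (hj : ∀ i, w j 1 ≤ w i 1) :
    IsHalfPlaneSAW m fun t => w (f t) - w j := by
  subst hf0
  exact ⟨hw.comp_sub hf hstep, fun t => sub_nonneg.mpr (hj _)⟩

noncomputable def splitAtLowest {n : ℕ} (w : {w : Fin (n + 1) → Fin 2 → ℤ // IsSAW 2 n w}) :
    Σ j : Fin (n + 1), HalfPlaneSAW j × HalfPlaneSAW (n - j) :=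
  ⟨lowestIndex w.1,
    ⟨fun t => w.1 ⟨lowestIndex w.1 - t, by omega⟩ - w.1 (lowestIndex w.1),
      w.2.isHalfPlaneSAW_comp_sub (fun a b h => by simp only [Fin.ext_iff] at h; omega)
        (fun i => by simp only [Fin.val_succ, Fin.val_castSucc]; omega) (Fin.ext (by simp)) (lowestIndex_le w.1)⟩,
    ⟨fun t => w.1 ⟨lowestIndex w.1 + t, by omega⟩ - w.1 (lowestIndex w.1),
      w.2.isHalfPlaneSAW_comp_sub (fun a b h => by simp only [Fin.ext_iff] at h; omega)
        (fun i => by simp only [Fin.val_succ, Fin.val_castSucc]; omega) (Fin.ext (by simp)) (lowestIndex_le w.1)⟩⟩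

def assemble {n : ℕ} (q : Σ j : Fin (n + 1), HalfPlaneSAW j × HalfPlaneSAW (n - j)) :
    Fin (n + 1) → Fin 2 → ℤ := fun i =>
  if h : (i : ℕ) ≤ q.1 then q.2.1.1 ⟨q.1 - i, by omega⟩ - q.2.1.1 (Fin.last _)
  else q.2.2.1 ⟨i - q.1, by omega⟩ - q.2.1.1 (Fin.last _)

lemma assemble_splitAtLowest {n : ℕ} (w : {w : Fin (n + 1) → Fin 2 → ℤ // IsSAW 2 n w}) :
    assemble (splitAtLowest w) = w.1 := by
  obtain ⟨w, hw⟩ := w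
  funext i
  by_cases h : (i : ℕ) ≤ lowestIndex w
  · simp [assemble, splitAtLowest, h, hw.2.1, Nat.sub_sub_self h]
  · simp [assemble, splitAtLowest, h, hw.2.1, Nat.add_sub_of_le (le_of_not_ge h)]

lemma sawCount_le_sum_hpTotal (n : ℕ) :
    sawCount 2 n ≤ ∑ j ∈ range (n + 1), hpTotal j * hpTotal (n - j) := by
  rw [← Fin.sum_univ_eq_sum_range (fun j => hpTotal j * hpTotal (n - j))]
  simp only [hpTotal, ← Nat.card_prod]
  rw [← Nat.card_sigma]
  refine Nat.card_le_card_of_injective splitAtLowest fun w w' h => Subtype.ext ?_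
  rw [← assemble_splitAtLowest w, h, assemble_splitAtLowest]

section PartitionFunction

variable {y : ℝ}

lemma hpPartition_nonneg (hy : 0 ≤ y) (n : ℕ) : 0 ≤ hpPartition n y := by
  unfold hpPartition
  positivity

lemma hpPartition_le_sawCount (hy0 : 0 ≤ y) (hy1 : y ≤ 1) (n : ℕ) :
    hpPartition n y ≤ sawCount 2 n :=
  calc hpPartition n y ≤ ∑ i ∈ range (n + 2), (hpCount n i : ℝ) :=
        sum_le_sum fun i _ => mul_le_of_le_one_right (Nat.cast_nonneg _) (pow_le_one₀ hy0 hy1)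
    _ ≤ sawCount 2 n := by exact_mod_cast sum_hpCount_le_sawCount n

lemma mul_hpTotal_le_hpPartition (hy : 0 ≤ y) (n : ℕ) : y * hpTotal n ≤ hpPartition (n + 1) y :=
  calc y * hpTotal n ≤ hpCount (n + 1) 1 * y ^ 1 := by
        rw [pow_one, mul_comm]
        gcongr
        exact_mod_cast hpTotal_le_hpCount_one n
    _ ≤ hpPartition (n + 1) y :=
        single_le_sum (f := fun i => (hpCount (n + 1) i : ℝ) * y ^ i) (fun i _ => by positivity)
          (by simp)

lemma sawCount_le_of_hpPartition_le {K ρ : ℝ} (hy : 0 < y)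
    (hK : ∀ n, hpPartition n y ≤ K * ρ ^ n) (n : ℕ) :
    (sawCount 2 n : ℝ) ≤ (K * ρ / y) ^ 2 * (n + 1) * ρ ^ n := by
  have hbound (m : ℕ) : (hpTotal m : ℝ) ≤ K * ρ / y * ρ ^ m := by
    rw [div_mul_eq_mul_div, le_div_iff₀ hy, mul_comm, mul_assoc, ← pow_succ']
    exact (mul_hpTotal_le_hpPartition hy.le m).trans (hK (m + 1))
  calc (sawCount 2 n : ℝ) ≤ ∑ j ∈ range (n + 1), (hpTotal j : ℝ) * hpTotal (n - j) := by
        exact_mod_cast sawCount_le_sum_hpTotal n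
    _ ≤ ∑ j ∈ range (n + 1), (K * ρ / y) ^ 2 * ρ ^ n := by
        refine sum_le_sum fun j hj => ?_
        calc (hpTotal j : ℝ) * hpTotal (n - j)
            ≤ (K * ρ / y * ρ ^ j) * (K * ρ / y * ρ ^ (n - j)) :=
              mul_le_mul (hbound j) (hbound _) (Nat.cast_nonneg _)
                ((Nat.cast_nonneg _).trans (hbound j))
          _ = (K * ρ / y) ^ 2 * ρ ^ n := by
              rw [← pow_mul_pow_sub ρ (mem_range_succ_iff.mp hj)]
              ring
    _ = (K * ρ / y) ^ 2 * (n + 1) * ρ ^ n := by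
        rw [sum_const, card_range, nsmul_eq_mul]
        push_cast
        ring

end PartitionFunction

/-- for all `0 < y ≤ 1`, the half-plane growth constant with
surface fugacity `y` satisfies `μ(y) = μ`, where `μ` is the growth constant of
SAWs on `ℤ²`. -/
theorem hp_growth_constant_eq (μ : ℝ)
    (hμ : Filter.Tendsto (fun n : ℕ => (sawCount 2 n : ℝ) ^ (1 / (n : ℝ)))
      Filter.atTop (nhds μ))
    (y : ℝ) (hy0 : 0 < y) (hy1 : y ≤ 1) (μy : ℝ)
    (hμy : Filter.Tendsto (fun n : ℕ => hpPartition n y ^ (1 / (n : ℝ)))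
      Filter.atTop (nhds μy)) :
    μy = μ := by
  have hpart_nonneg := hpPartition_nonneg hy0.le
  have hsaw_nonneg (n : ℕ) : (0 : ℝ) ≤ sawCount 2 n := Nat.cast_nonneg _
  refine le_antisymm (le_of_tendsto_of_tendsto' hμy hμ fun n =>
    Real.rpow_le_rpow (hpart_nonneg n) (hpPartition_le_sawCount hy0.le hy1 n) (by positivity)) ?_
  refine le_of_forall_gt_imp_ge_of_dense fun ρ' hρ' => ?_
  obtain ⟨ρ, hμyρ, hρρ'⟩ := exists_between hρ'
  have hρ : 0 ≤ ρ := (nonneg_of_tendsto_rpow hpart_nonneg hμy).trans hμyρ.le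
  obtain ⟨K, hK⟩ := exists_forall_le_mul_pow_of_tendsto_rpow hpart_nonneg hμy hμyρ
  refine le_of_tendsto_rpow_of_eventually_le_pow hsaw_nonneg hμ (hρ.trans hρρ'.le) ?_
  filter_upwards [eventually_mul_pow_le_pow ((K * ρ / y) ^ 2) hρ hρρ'] with n hn
  exact (sawCount_le_of_hpPartition_le hy0 hK n).trans hn
end

section
/- For every real b > 0, ∫_{-1}^{1} (u² + 1)^{-b} (1 − u²)^{b−1} du = √π · Γ(b/2) / (2 Γ(b/2 + 1/2)). -/
open MeasureTheory Set Real

/-!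
The substitution `v = 2u / (1 + u²)` (that is, `u = tan (θ/2)`, `v = sin θ`) maps `(-1, 1)`
increasingly onto itself, with `1 - v² = ((1 - u²) / (1 + u²))²`; it turns the integrand into
`(1 - v²) ^ (b/2 - 1) / 2`. The affine substitution `v = 2t - 1` turns the latter integral into
`2 ^ (b - 1) B(b/2, b/2)`, and Legendre's duplication formula gives the closed form.
-/

theorem integral_rpow_mul_one_sub_rpow {u v : ℝ} (hu : 0 < u) (hv : 0 < v) :
    ∫ x in (0 : ℝ)..1, x ^ (u - 1) * (1 - x) ^ (v - 1) = Gamma u * Gamma v / Gamma (u + v) := by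
  have h : ((∫ x in (0 : ℝ)..1, x ^ (u - 1) * (1 - x) ^ (v - 1) : ℝ) : ℂ) =
      Complex.betaIntegral u v := by
    rw [Complex.betaIntegral, ← intervalIntegral.integral_ofReal]
    refine intervalIntegral.integral_congr fun x hx => ?_
    rw [uIcc_of_le zero_le_one] at hx
    push_cast [Complex.ofReal_cpow hx.1, Complex.ofReal_cpow (sub_nonneg.2 hx.2)]
    rfl
  rw [← Complex.ofReal_inj, h, Complex.betaIntegral_eq_Gamma_mul_div _ _ (by simpa) (by simpa)]
  push_cast [← Complex.Gamma_ofReal]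
  rfl

theorem integral_one_sub_sq_rpow {c : ℝ} (hc : 0 < c) :
    ∫ x in (-1 : ℝ)..1, (1 - x ^ 2) ^ (c - 1) = √π * Gamma c / Gamma (c + 1 / 2) := by
  have hpt : ∀ t ∈ uIcc (0 : ℝ) 1,
      (1 - (2 * t - 1) ^ 2) ^ (c - 1) = 4 ^ (c - 1) * (t ^ (c - 1) * (1 - t) ^ (c - 1)) := by
    intro t ht
    rw [uIcc_of_le zero_le_one] at ht
    have h1t : 0 ≤ 1 - t := sub_nonneg.2 ht.2
    rw [show 1 - (2 * t - 1) ^ 2 = 4 * (t * (1 - t)) by ring,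
      mul_rpow (by norm_num) (mul_nonneg ht.1 h1t), mul_rpow ht.1 h1t]
  have haffine : ∫ x in (-1 : ℝ)..1, (1 - x ^ 2) ^ (c - 1) =
      2 * ∫ t in (0 : ℝ)..1, (1 - (2 * t - 1) ^ 2) ^ (c - 1) := by
    rw [intervalIntegral.integral_comp_mul_sub (fun x => (1 - x ^ 2) ^ (c - 1)) two_ne_zero 1]
    norm_num
    ring
  have hpow : (2 : ℝ) * 4 ^ (c - 1) * 2 ^ (1 - 2 * c) = 1 := by
    rw [show (4 : ℝ) = 2 ^ (2 : ℝ) by norm_num, ← rpow_mul zero_le_two, mul_assoc,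
      ← rpow_add zero_lt_two, show 2 * (c - 1) + (1 - 2 * c) = -1 by ring, rpow_neg_one]
    norm_num
  have hG : Gamma (c + 1 / 2) ≠ 0 := (Gamma_pos_of_pos (by positivity)).ne'
  have hG2 : Gamma (2 * c) ≠ 0 := (Gamma_pos_of_pos (by positivity)).ne'
  rw [haffine, intervalIntegral.integral_congr hpt, intervalIntegral.integral_const_mul,
    integral_rpow_mul_one_sub_rpow hc hc, ← two_mul, eq_div_iff hG]
  have hLeg := Gamma_mul_Gamma_add_half c
  have hinv : (Gamma (2 * c))⁻¹ * Gamma (2 * c) = 1 := inv_mul_cancel₀ hG2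
  rw [div_eq_mul_inv]
  linear_combination (2 * 4 ^ (c - 1) * Gamma c * (Gamma (2 * c))⁻¹) * hLeg +
    (2 * 4 ^ (c - 1) * 2 ^ (1 - 2 * c) * Gamma c * √π) * hinv + (Gamma c * √π) * hpow

theorem hasDerivAt_two_mul_div_one_add_sq (u : ℝ) :
    HasDerivAt (fun u : ℝ => 2 * u / (1 + u ^ 2)) (2 * (1 - u ^ 2) / (1 + u ^ 2) ^ 2) u := by
  have hnum : HasDerivAt (fun u : ℝ => 2 * u) 2 u := by
    simpa using (hasDerivAt_id u).const_mul 2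
  have hden : HasDerivAt (fun u : ℝ => 1 + u ^ 2) (2 * u) u := by
    simpa using (hasDerivAt_pow 2 u).const_add 1
  exact (hnum.fun_div hden (by positivity)).congr_deriv (by ring)

theorem image_two_mul_div_one_add_sq_Ioo :
    (fun u : ℝ => 2 * u / (1 + u ^ 2)) '' Ioo (-1) 1 = Ioo (-1) 1 := by
  refine Subset.antisymm ?_ ?_
  · rintro _ ⟨u, hu, rfl⟩
    have hA : 0 < 1 + u ^ 2 := by positivity
    constructor
    · rw [lt_div_iff₀ hA]; nlinarith [hu.1]
    · rw [div_lt_one hA]; nlinarith [hu.2]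
  · have h := intermediate_value_Ioo (by norm_num : (-1 : ℝ) ≤ 1)
      (fun u _ => (hasDerivAt_two_mul_div_one_add_sq u).continuousAt.continuousWithinAt)
    norm_num at h
    exact h

theorem integral_Ioo_comp_two_mul_div_one_add_sq {E : Type*} [NormedAddCommGroup E]
    [NormedSpace ℝ E] (g : ℝ → E) :
    ∫ u in Ioo (-1 : ℝ) 1, (2 * (1 - u ^ 2) / (1 + u ^ 2) ^ 2) • g (2 * u / (1 + u ^ 2)) =
      ∫ v in Ioo (-1 : ℝ) 1, g v := by
  have hmono : StrictMonoOn (fun u : ℝ => 2 * u / (1 + u ^ 2)) (Icc (-1) 1) := by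
    refine strictMonoOn_of_deriv_pos (convex_Icc _ _)
      (fun u _ => (hasDerivAt_two_mul_div_one_add_sq u).continuousAt.continuousWithinAt)
      fun u hu => ?_
    rw [interior_Icc] at hu
    rw [(hasDerivAt_two_mul_div_one_add_sq u).deriv]
    have : 0 < 1 - u ^ 2 := by nlinarith [hu.1, hu.2]
    positivity
  conv_rhs => rw [← image_two_mul_div_one_add_sq_Ioo]
  rw [integral_image_eq_integral_abs_deriv_smul measurableSet_Ioo
    (fun u _ => (hasDerivAt_two_mul_div_one_add_sq u).hasDerivWithinAt)
    (hmono.injOn.mono Ioo_subset_Icc_self)]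
  refine setIntegral_congr_fun measurableSet_Ioo fun u hu => ?_
  have : 0 < 1 - u ^ 2 := by nlinarith [hu.1, hu.2]
  rw [abs_of_pos (by positivity)]

theorem one_sub_two_mul_div_one_add_sq_sq (u : ℝ) :
    1 - (2 * u / (1 + u ^ 2)) ^ 2 = ((1 - u ^ 2) / (1 + u ^ 2)) ^ 2 := by
  field_simp
  ring

theorem sq_add_one_rpow_neg_mul_one_sub_sq_rpow {b u : ℝ} (hu : u ^ 2 < 1) :
    (u ^ 2 + 1) ^ (-b) * (1 - u ^ 2) ^ (b - 1) =
      2⁻¹ * (2 * (1 - u ^ 2) / (1 + u ^ 2) ^ 2 *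
        (1 - (2 * u / (1 + u ^ 2)) ^ 2) ^ (b / 2 - 1)) := by
  have hA : 0 < 1 + u ^ 2 := by positivity
  have hP : 0 < 1 - u ^ 2 := sub_pos.2 hu
  rw [one_sub_two_mul_div_one_add_sq_sq, ← rpow_natCast ((1 - u ^ 2) / (1 + u ^ 2)),
    ← rpow_mul (by positivity), div_rpow hP.le hA.le, add_comm (u ^ 2), rpow_neg hA.le,
    rpow_sub_one hP.ne',
    show (2 : ℕ) * (b / 2 - 1) = b - 2 by push_cast; ring, rpow_sub hP, rpow_sub hA,
    rpow_two, rpow_two]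
  have hPb := (rpow_pos_of_pos hP b).ne'
  have hAb := (rpow_pos_of_pos hA b).ne'
  field_simp

/-- for every real `b > 0`,
`∫₋₁^1 (u²+1)^{−b} (1−u²)^{b−1} du = √π Γ(b/2) / (2 Γ(b/2 + 1/2))`. -/
theorem saw_hitting_denominator_integral (b : ℝ) (hb : 0 < b) :
    (∫ u in (-1 : ℝ)..1, (u ^ 2 + 1) ^ (-b) * (1 - u ^ 2) ^ (b - 1)) =
      Real.sqrt Real.pi * Real.Gamma (b / 2) / (2 * Real.Gamma (b / 2 + 1 / 2)) := by
  have hIoo (f : ℝ → ℝ) : ∫ x in (-1 : ℝ)..1, f x = ∫ x in Ioo (-1 : ℝ) 1, f x := by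
    rw [intervalIntegral.integral_of_le (by norm_num), integral_Ioc_eq_integral_Ioo]
  calc (∫ u in (-1 : ℝ)..1, (u ^ 2 + 1) ^ (-b) * (1 - u ^ 2) ^ (b - 1))
      = ∫ u in Ioo (-1 : ℝ) 1, 2⁻¹ * (2 * (1 - u ^ 2) / (1 + u ^ 2) ^ 2 *
          (1 - (2 * u / (1 + u ^ 2)) ^ 2) ^ (b / 2 - 1)) := by
        rw [hIoo]
        refine setIntegral_congr_fun measurableSet_Ioo fun u hu => ?_
        exact sq_add_one_rpow_neg_mul_one_sub_sq_rpow
          ((sq_lt_one_iff_abs_lt_one u).2 (abs_lt.2 hu))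
    _ = 2⁻¹ * ∫ v in (-1 : ℝ)..1, (1 - v ^ 2) ^ (b / 2 - 1) := by
        rw [integral_const_mul, hIoo,
          ← integral_Ioo_comp_two_mul_div_one_add_sq fun v => (1 - v ^ 2) ^ (b / 2 - 1)]
        simp only [smul_eq_mul]
    _ = √π * Gamma (b / 2) / (2 * Gamma (b / 2 + 1 / 2)) := by
        rw [integral_one_sub_sq_rpow (half_pos hb)]
        ring
end
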